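/- arXiv:2210.13028 — 2 statements merged into one kernel-verified Lean document; each statement's English description precedes it below -/
import Mathlib

section
/- Let R(x) = Q(Q⁻¹(x/2) − μ) + Q(Q⁻¹(x/2) + μ) for μ > 0 and x ∈ (0,1) (the ROC curve of the GLRT adversary in dimension 1), and let R_N(x) = Q(Q⁻¹(x) − μ) (the ROC curve of the Neyman–Pearson optimal adversary). Then R(x) ≤ R_N(x) for all x ∈ (0,1). -/
open MeasureTheory ProbabilityTheory Filter Set Asymptotics

/-- Survival function of the standard normal distribution. -/
noncomputable def Q (k : ℝ) : ℝ :=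
  (1 / Real.sqrt (2 * Real.pi)) * ∫ t in Set.Ioi k, Real.exp (-t ^ 2 / 2)

/-- Inverse of the standard normal survival function. -/
noncomputable def Qinv : ℝ → ℝ := Function.invFun Q

/-! Under the null hypothesis the statistic is `s ∼ N(0, 1)`, under the alternative `s ∼ N(μ, 1)`.
Both sides are powers of tests of level `x`: the GLRT rejects on `{|s| > Q⁻¹(x/2)}`, the other test
on `{s > Q⁻¹(x)}`. The likelihood ratio `exp (μ s - μ² / 2)` is increasing in `s`, so by the
Neyman–Pearson argument the one-sided threshold test is at least as powerful as any other test of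
the same level. -/

open Topology

lemma Q_eq_setIntegral (k : ℝ) : Q k = ∫ t in Ioi k, gaussianPDFReal 0 1 t := by
  rw [Q, ← integral_const_mul]
  refine setIntegral_congr_fun measurableSet_Ioi fun t _ => ?_
  simp [gaussianPDFReal, div_eq_mul_inv]

lemma Q_sub_Q (a b : ℝ) : Q a - Q b = ∫ t in a..b, gaussianPDFReal 0 1 t := by
  have hi := integrable_gaussianPDFReal 0 1
  rw [Q_eq_setIntegral, Q_eq_setIntegral,
    intervalIntegral.integral_Ioi_sub_Ioi' hi.integrableOn hi.integrableOn]

lemma Q_strictAnti : StrictAnti Q := fun a b hab => by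
  have := intervalIntegral.intervalIntegral_pos_of_pos
    (integrable_gaussianPDFReal 0 1).intervalIntegrable
    (fun t => gaussianPDFReal_pos 0 1 t one_ne_zero) hab
  linarith [Q_sub_Q a b]

lemma Q_eq_Q_zero_sub (k : ℝ) : Q k = Q 0 - ∫ t in (0 : ℝ)..k, gaussianPDFReal 0 1 t := by
  linarith [Q_sub_Q 0 k]

lemma Q_continuous : Continuous Q := by
  rw [funext Q_eq_Q_zero_sub]
  exact continuous_const.sub ((integrable_gaussianPDFReal 0 1).continuous_primitive 0)

lemma Q_add_Q_neg (k : ℝ) : Q k + Q (-k) = 1 := by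
  have hi := integrable_gaussianPDFReal 0 1
  have hsymm : Q (-k) = ∫ t in Iic k, gaussianPDFReal 0 1 t := by
    rw [Q_eq_setIntegral, ← integral_comp_neg_Iic]
    refine setIntegral_congr_fun measurableSet_Iic fun t _ => ?_
    simp [gaussianPDFReal]
  rw [hsymm, Q_eq_setIntegral, add_comm,
    intervalIntegral.integral_Iic_add_Ioi hi.integrableOn hi.integrableOn,
    integral_gaussianPDFReal_eq_one 0 one_ne_zero]

lemma tendsto_Q_atTop : Tendsto Q atTop (𝓝 0) := by
  have h := intervalIntegral_tendsto_integral_Ioi 0 (integrable_gaussianPDFReal 0 1).integrableOn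
    tendsto_id
  rw [← Q_eq_setIntegral] at h
  simpa [← Q_eq_Q_zero_sub] using (tendsto_const_nhds (x := Q 0)).sub h

lemma tendsto_Q_atBot : Tendsto Q atBot (𝓝 1) := by
  have h := (tendsto_const_nhds (x := (1 : ℝ))).sub (tendsto_Q_atTop.comp tendsto_neg_atBot_atTop)
  simpa [show ∀ k, 1 - Q (-k) = Q k from fun k => by linarith [Q_add_Q_neg k]] using h

lemma Q_Qinv {y : ℝ} (hy : y ∈ Ioo (0 : ℝ) 1) : Q (Qinv y) = y := by
  refine Function.invFun_eq (mem_range_of_exists_le_of_exists_ge Q_continuous ?_ ?_)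
  · exact ((tendsto_Q_atTop.eventually (gt_mem_nhds hy.1)).exists).imp fun _ => le_of_lt
  · exact ((tendsto_Q_atBot.eventually (lt_mem_nhds hy.2)).exists).imp fun _ => le_of_lt

lemma Q_sub_eq_setIntegral (a m : ℝ) : Q (a - m) = ∫ s in Ioi a, gaussianPDFReal m 1 s := by
  have h := (measurePreserving_sub_right volume m).setIntegral_preimage_emb
    (measurableEmbedding_subRight m) (gaussianPDFReal 0 1) (Ioi (a - m))
  simp only [preimage_sub_const_Ioi, sub_add_cancel, gaussianPDFReal_sub, zero_add] at h
  rw [Q_eq_setIntegral, ← h]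

lemma Q_add_eq_setIntegral (a m : ℝ) : Q (a + m) = ∫ s in Iic (-a), gaussianPDFReal m 1 s := by
  have hi := integrable_gaussianPDFReal m 1
  have h := intervalIntegral.integral_Iic_add_Ioi (b := -a) hi.integrableOn hi.integrableOn
  rw [integral_gaussianPDFReal_eq_one m one_ne_zero, ← Q_sub_eq_setIntegral,
    show -a - m = -(a + m) by ring] at h
  linarith [Q_add_Q_neg (a + m)]

lemma Q_sub_add_Q_add {a : ℝ} (ha : 0 ≤ a) (m : ℝ) :
    Q (a - m) + Q (a + m) = ∫ s in Iic (-a) ∪ Ioi a, gaussianPDFReal m 1 s := by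
  have hi := integrable_gaussianPDFReal m 1
  rw [setIntegral_union (Iic_disjoint_Ioi (by linarith)) measurableSet_Ioi hi.integrableOn
    hi.integrableOn, Q_sub_eq_setIntegral, Q_add_eq_setIntegral, add_comm]

lemma gaussianPDFReal_eq_exp_mul (m : ℝ) (v : NNReal) (s : ℝ) :
    gaussianPDFReal m v s = Real.exp ((m * s - m ^ 2 / 2) / v) * gaussianPDFReal 0 v s := by
  simp only [gaussianPDFReal, sub_zero]
  rw [mul_left_comm, ← Real.exp_add]
  congr 3
  ring

lemma neymanPearson_setIntegral_le {α : Type*} [MeasurableSpace α] {ν : Measure α}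
    {f g : α → ℝ} {A B : Set α} {K : ℝ} (hf : Integrable f ν) (hg : Integrable g ν)
    (hA : MeasurableSet A) (hB : MeasurableSet B) (hfAB : ∫ x in A, f x ∂ν = ∫ x in B, f x ∂ν)
    (hle : ∀ x ∈ A \ B, g x ≤ K * f x) (hge : ∀ x ∈ B \ A, K * f x ≤ g x) :
    ∫ x in A, g x ∂ν ≤ ∫ x in B, g x ∂ν := by
  have hf_sdiff : ∫ x in A \ B, f x ∂ν = ∫ x in B \ A, f x ∂ν := by
    have hfA := integral_inter_add_sdiff hB hf.integrableOn (μ := ν) (s := A)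
    have hfB := integral_inter_add_sdiff hA hf.integrableOn (μ := ν) (s := B)
    rw [inter_comm] at hfB
    linarith
  calc ∫ x in A, g x ∂ν = ∫ x in A ∩ B, g x ∂ν + ∫ x in A \ B, g x ∂ν :=
        (integral_inter_add_sdiff hB hg.integrableOn).symm
    _ ≤ ∫ x in A ∩ B, g x ∂ν + K * ∫ x in A \ B, f x ∂ν := by
        rw [← integral_const_mul]
        linarith [setIntegral_mono_on hg.integrableOn (hf.integrableOn.const_mul K)
          (hA.diff hB) hle]
    _ = ∫ x in B ∩ A, g x ∂ν + K * ∫ x in B \ A, f x ∂ν := by rw [hf_sdiff, inter_comm]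
    _ ≤ ∫ x in B ∩ A, g x ∂ν + ∫ x in B \ A, g x ∂ν := by
        rw [← integral_const_mul]
        linarith [setIntegral_mono_on (hf.integrableOn.const_mul K) hg.integrableOn
          (hB.diff hA) hge]
    _ = ∫ x in B, g x ∂ν := integral_inter_add_sdiff hA hg.integrableOn

theorem stmt3 (μ : ℝ) (hμ : 0 < μ) (x : ℝ) (hx : x ∈ Set.Ioo (0 : ℝ) 1) :
    Q (Qinv (x / 2) - μ) + Q (Qinv (x / 2) + μ) ≤ Q (Qinv x - μ) := by
  set a := Qinv (x / 2)
  set b := Qinv x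
  have hQa : Q a = x / 2 := Q_Qinv ⟨by linarith [hx.1], by linarith [hx.2]⟩
  have hQb : Q b = x := Q_Qinv hx
  have hQ0 : Q 0 = 1 / 2 := by linarith [neg_zero (G := ℝ) ▸ Q_add_Q_neg 0]
  have ha : 0 ≤ a := Q_strictAnti.le_iff_ge.1 <| by linarith [hx.2]
  rw [Q_sub_add_Q_add ha, Q_sub_eq_setIntegral]
  refine neymanPearson_setIntegral_le (K := Real.exp (μ * b - μ ^ 2 / 2))
    (integrable_gaussianPDFReal 0 1) (integrable_gaussianPDFReal μ 1)
    (measurableSet_Iic.union measurableSet_Ioi) measurableSet_Ioi ?_ ?_ ?_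
  · rw [← Q_sub_add_Q_add ha, ← Q_sub_eq_setIntegral]
    simp only [sub_zero, add_zero, hQa, hQb]
    ring
  · intro s hs
    rw [gaussianPDFReal_eq_exp_mul μ, NNReal.coe_one, div_one]
    gcongr
    · exact gaussianPDFReal_nonneg 0 1 s
    · exact not_lt.1 hs.2
  · intro s hs
    rw [gaussianPDFReal_eq_exp_mul μ, NNReal.coe_one, div_one]
    gcongr
    · exact gaussianPDFReal_nonneg 0 1 s
    · exact le_of_lt hs.1
end

section
/- The survival function of the noncentral chi-squared distribution with noncentrality λ ≥ 0 is nondecreasing in λ at every point: if 0 ≤ λ₁ ≤ λ₂ then for all t ≥ 0, Pr(χ²_d(λ₁) > t) ≤ Pr(χ²_d(λ₂) > t). -/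
open MeasureTheory ProbabilityTheory Filter Set Asymptotics

/-- The noncentral chi-squared distribution with d degrees of freedom and noncentrality
parameter lam: the law of the squared norm of a d-dimensional standard Gaussian vector whose
mean vector has squared norm lam. -/
noncomputable def noncentralChiSq (d : ℕ) (lam : ℝ) : Measure ℝ :=
  Measure.map (fun z : Fin d → ℝ => ∑ j, z j ^ 2)
    (Measure.pi fun j : Fin d => gaussianReal (if (j : ℕ) = 0 then Real.sqrt lam else 0) 1)


lemma phi_intInt (a b : ℝ) : IntervalIntegrable (fun x => Real.exp (-x^2/2)) volume a b :=
  (Real.continuous_exp.comp (by continuity)).intervalIntegrable a b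

/-- key comparison: shifted window integral of the gaussian kernel is antitone in the shift. -/
lemma windowA {r μ₁ μ₂ : ℝ} (hr : 0 ≤ r) (h1 : 0 ≤ μ₁) (h12 : μ₁ ≤ μ₂) :
    (∫ x in (μ₂ - r)..(μ₂ + r), Real.exp (-x^2/2))
      ≤ ∫ x in (μ₁ - r)..(μ₁ + r), Real.exp (-x^2/2) := by
  have key : (∫ x in (μ₁ + r)..(μ₂ + r), Real.exp (-x^2/2))
      ≤ ∫ x in (μ₁ - r)..(μ₂ - r), Real.exp (-x^2/2) := by
    have h := intervalIntegral.integral_comp_add_right (a := μ₁ - r) (b := μ₂ - r)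
      (fun x => Real.exp (-x^2/2)) (2*r)
    have h2 : μ₁ - r + 2*r = μ₁ + r := by ring
    have h3 : μ₂ - r + 2*r = μ₂ + r := by ring
    rw [h2, h3] at h
    rw [← h]
    apply intervalIntegral.integral_mono_on (by linarith) ((Real.continuous_exp.comp (by continuity)).intervalIntegrable _ _)
      (phi_intInt _ _)
    intro x hx
    have hx1 : μ₁ - r ≤ x := hx.1
    apply Real.exp_le_exp.mpr
    nlinarith
  have s1 : (∫ x in (μ₁ - r)..(μ₂ - r), Real.exp (-x^2/2))
      + ∫ x in (μ₂ - r)..(μ₂ + r), Real.exp (-x^2/2)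
      = ∫ x in (μ₁ - r)..(μ₂ + r), Real.exp (-x^2/2) :=
    intervalIntegral.integral_add_adjacent_intervals (phi_intInt _ _) (phi_intInt _ _)
  have s2 : (∫ x in (μ₁ - r)..(μ₁ + r), Real.exp (-x^2/2))
      + ∫ x in (μ₁ + r)..(μ₂ + r), Real.exp (-x^2/2)
      = ∫ x in (μ₁ - r)..(μ₂ + r), Real.exp (-x^2/2) :=
    intervalIntegral.integral_add_adjacent_intervals (phi_intInt _ _) (phi_intInt _ _)
  linarith

lemma gauss_Icc (μ : ℝ) {r : ℝ} (hr : 0 ≤ r) :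
    gaussianReal μ 1 (Set.Icc (-r) r)
      = ENNReal.ofReal ((Real.sqrt (2*Real.pi))⁻¹
          * ∫ x in (μ - r)..(μ + r), Real.exp (-x^2/2)) := by
  rw [gaussianReal_apply_eq_integral μ one_ne_zero]
  congr 1
  rw [MeasureTheory.integral_Icc_eq_integral_Ioc,
    ← intervalIntegral.integral_of_le (by linarith : -r ≤ r)]
  have hpdf : ∀ x : ℝ, gaussianPDFReal μ 1 x
      = (Real.sqrt (2*Real.pi))⁻¹ * Real.exp (-(x - μ)^2/2) := by
    intro x
    simp [gaussianPDFReal]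
  simp_rw [hpdf]
  rw [intervalIntegral.integral_const_mul]
  congr 1
  rw [intervalIntegral.integral_comp_sub_right (fun x => Real.exp (-x^2/2)) μ]
  have hneg : (∫ x in (μ - r)..(μ + r), Real.exp (-x^2/2))
      = ∫ x in (μ - r)..(μ + r), Real.exp (-(-x)^2/2) := by
    congr 1; ext x; ring_nf
  rw [hneg, intervalIntegral.integral_comp_neg (fun x => Real.exp (-x^2/2))]
  congr 1 <;> ring

lemma gauss_sq_mono {μ₁ μ₂ : ℝ} (h1 : 0 ≤ μ₁) (h12 : μ₁ ≤ μ₂) (s : ℝ) :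
    gaussianReal μ₁ 1 {x | s < x^2} ≤ gaussianReal μ₂ 1 {x | s < x^2} := by
  have hA : MeasurableSet {x : ℝ | x^2 ≤ s} :=
    measurableSet_le (measurable_id.pow_const 2) measurable_const
  have hcompl : {x : ℝ | s < x^2} = {x : ℝ | x^2 ≤ s}ᶜ := by
    ext x; simp [not_le]
  have hB : gaussianReal μ₂ 1 {x | x^2 ≤ s} ≤ gaussianReal μ₁ 1 {x | x^2 ≤ s} := by
    rcases lt_or_ge s 0 with hs | hs
    · have : {x : ℝ | x^2 ≤ s} = ∅ := by
        ext x; simp only [Set.mem_setOf_eq, Set.mem_empty_iff_false, iff_false, not_le]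
        nlinarith [sq_nonneg x]
      simp [this]
    · have hset : {x : ℝ | x^2 ≤ s} = Set.Icc (-Real.sqrt s) (Real.sqrt s) := by
        ext x
        simp only [Set.mem_setOf_eq, Set.mem_Icc, ← abs_le]
        rw [show x^2 = |x|^2 from (sq_abs x).symm]
        exact (Real.le_sqrt (abs_nonneg x) hs).symm
      rw [hset, gauss_Icc μ₁ (Real.sqrt_nonneg s), gauss_Icc μ₂ (Real.sqrt_nonneg s)]
      exact ENNReal.ofReal_le_ofReal (mul_le_mul_of_nonneg_left
        (windowA (Real.sqrt_nonneg s) h1 h12)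
        (inv_nonneg.mpr (Real.sqrt_nonneg _)))
  rw [hcompl, measure_compl hA (measure_ne_top _ _), measure_compl hA (measure_ne_top _ _),
    measure_univ, measure_univ]
  exact tsub_le_tsub_left hB 1

lemma pi_eq (n : ℕ) (μ : ℝ) (t : ℝ) :
    (Measure.pi fun j : Fin (n+1) => gaussianReal (if (j : ℕ) = 0 then μ else 0) 1)
        ((fun z : Fin (n+1) → ℝ => ∑ j, z j ^ 2) ⁻¹' Set.Ioi t)
      = ∫⁻ y : Fin n → ℝ, gaussianReal μ 1 {x | t < x ^ 2 + ∑ j, y j ^ 2}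
          ∂(Measure.pi fun _ : Fin n => gaussianReal 0 1) := by
  set e := MeasurableEquiv.piFinSuccAbove (fun _ : Fin (n+1) => ℝ) 0 with he
  have mp := measurePreserving_piFinSuccAbove
    (fun j : Fin (n+1) => gaussianReal (if (j : ℕ) = 0 then μ else 0) 1) 0
  set T : Set (ℝ × (Fin n → ℝ)) := {p | t < p.1 ^ 2 + ∑ j, p.2 j ^ 2} with hTdef
  have hT : MeasurableSet T :=
    measurableSet_lt measurable_const ((measurable_fst.pow_const 2).add
      (Finset.univ.measurable_sum fun j _ =>
        ((measurable_pi_apply j).comp measurable_snd).pow_const 2))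
  have hpre : (fun z : Fin (n+1) → ℝ => ∑ j, z j ^ 2) ⁻¹' Set.Ioi t = e ⁻¹' T := by
    ext z
    have hsum : ∑ j, z j ^ 2
        = z 0 ^ 2 + ∑ j : Fin n, z ((0 : Fin (n+1)).succAbove j) ^ 2 :=
      Fin.sum_univ_succAbove (fun j => z j ^ 2) 0
    simp [he, hTdef, MeasurableEquiv.piFinSuccAbove, Fin.removeNth, Fin.tail, hsum]
  rw [hpre, mp.measure_preimage hT.nullMeasurableSet]
  have h1 : (fun j : Fin n =>
      gaussianReal (if (((0 : Fin (n+1)).succAbove j : Fin (n+1)) : ℕ) = 0 then μ else 0) 1)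
      = fun _ : Fin n => gaussianReal 0 1 := by
    funext j; simp [Fin.zero_succAbove]
  simp only [Fin.val_zero, if_pos rfl] at *
  rw [h1, Measure.prod_apply_symm hT]
  rfl

theorem stmt7' (d : ℕ) (hd : 1 ≤ d) (lam₁ lam₂ : ℝ) (h0 : 0 ≤ lam₁) (h12 : lam₁ ≤ lam₂)
    (t : ℝ) (ht : 0 ≤ t) :
    (Measure.map (fun z : Fin d → ℝ => ∑ j, z j ^ 2)
    (Measure.pi fun j : Fin d => gaussianReal (if (j : ℕ) = 0 then Real.sqrt lam₁ else 0) 1)) (Set.Ioi t) ≤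
    (Measure.map (fun z : Fin d → ℝ => ∑ j, z j ^ 2)
    (Measure.pi fun j : Fin d => gaussianReal (if (j : ℕ) = 0 then Real.sqrt lam₂ else 0) 1)) (Set.Ioi t) := by
  obtain ⟨n, rfl⟩ : ∃ n, d = n + 1 := ⟨d - 1, by omega⟩
  have hf : Measurable (fun z : Fin (n+1) → ℝ => ∑ j, z j ^ 2) :=
    Finset.univ.measurable_sum fun j _ => (measurable_pi_apply j).pow_const 2
  rw [Measure.map_apply hf measurableSet_Ioi, Measure.map_apply hf measurableSet_Ioi,
    pi_eq, pi_eq]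
  refine lintegral_mono fun y => ?_
  have hset : ∀ μ : ℝ, {x : ℝ | t < x ^ 2 + ∑ j, y j ^ 2}
      = {x : ℝ | t - ∑ j, y j ^ 2 < x ^ 2} := by
    intro μ; ext x; simp only [Set.mem_setOf_eq]; constructor <;> intro h <;> linarith
  rw [hset 0]
  exact gauss_sq_mono (Real.sqrt_nonneg _) (Real.sqrt_le_sqrt h12) _

theorem stmt7 (d : ℕ) (hd : 1 ≤ d) (lam₁ lam₂ : ℝ) (h0 : 0 ≤ lam₁) (h12 : lam₁ ≤ lam₂)
    (t : ℝ) (ht : 0 ≤ t) :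
    noncentralChiSq d lam₁ (Set.Ioi t) ≤ noncentralChiSq d lam₂ (Set.Ioi t) := by
  exact stmt7' d hd lam₁ lam₂ h0 h12 t ht
end
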